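/- arXiv:1309.1596 — 4 statements merged into one kernel-verified Lean document; each statement's English description precedes it below -/
import Mathlib

section
/- Let P_{A,E} be a joint sub-distribution on 𝒜 × ℰ with P_E(e) > 0 for every e ∈ ℰ, and let s ∈ (−1, ∞) with s ≠ 0. Then H^↑_{1+s}(A|E|P_{A,E}) = −((1+s)/s) · log ∑_{e∈ℰ} (∑_{a∈𝒜} P_{A,E}(a,e)^{1+s})^{1/(1+s)}, and the supremum defining H^↑_{1+s}(A|E|P_{A,E}) is attained at the normalized distribution Q_E(e) = (∑_a P_{A,E}(a,e)^{1+s})^{1/(1+s)} / ∑_{e'} (∑_a P_{A,E}(a,e')^{1+s})^{1/(1+s)}. -/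
open Real Finset Filter

attribute [local instance] Classical.propDecidable

namespace Hayashi

def IsSubDist {S : Type*} [Fintype S] (P : S → ℝ) : Prop :=
  (∀ x, 0 ≤ P x) ∧ ∑ x, P x ≤ 1

def IsDist {S : Type*} [Fintype S] (P : S → ℝ) : Prop :=
  (∀ x, 0 ≤ P x) ∧ ∑ x, P x = 1

variable {A E : Type*} [Fintype A] [Fintype E]

noncomputable def margE (P : A × E → ℝ) (e : E) : ℝ := ∑ a, P (a, e)

noncomputable def margNorm (P : A × E → ℝ) (e : E) : ℝ := margE P e / ∑ e', margE P e'

noncomputable def l1 (P P' : A × E → ℝ) : ℝ := ∑ a, ∑ e, |P (a, e) - P' (a, e)|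

noncomputable def eta (x y : ℝ) : ℝ := -x * Real.log x + x * y

noncomputable def condRenyi (P : A × E → ℝ) (Q : E → ℝ) (s : ℝ) : ℝ :=
  (-1 / s) * Real.log (∑ a, ∑ e, P (a, e) ^ (1 + s) * Q e ^ (-s))

noncomputable def condRenyiUp (P : A × E → ℝ) (s : ℝ) : ℝ :=
  sSup {x | ∃ Q : E → ℝ, IsDist Q ∧ (∀ e, 0 < Q e) ∧ x = condRenyi P Q s}

noncomputable def condRenyiDown (P : A × E → ℝ) (s : ℝ) : ℝ :=
  condRenyi P (margNorm P) s

noncomputable def condEnt (P : A × E → ℝ) : ℝ :=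
  -∑ a, ∑ e, P (a, e) * Real.log (P (a, e) / margE P e)

noncomputable def H2cond (P : A × E → ℝ) (Q : E → ℝ) : ℝ :=
  -Real.log (∑ a, ∑ e, P (a, e) ^ 2 / Q e)

noncomputable def d2cond (P : A × E → ℝ) (Q : E → ℝ) : ℝ :=
  ∑ a, ∑ e, (P (a, e) - margE P e / (Fintype.card A : ℝ)) ^ 2 / Q e

noncomputable def d1' (P : A × E → ℝ) : ℝ :=
  ∑ a, ∑ e, |P (a, e) - margE P e / (Fintype.card A : ℝ)|

noncomputable def Iprime (P : A × E → ℝ) : ℝ :=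
  ∑ a, ∑ e, P (a, e) * Real.log (P (a, e) * (Fintype.card A : ℝ) / margE P e)

noncomputable def Hmin (P : A × E → ℝ) (Q : E → ℝ) : ℝ :=
  -Real.log (sSup {r | ∃ a e, 0 < Q e ∧ r = P (a, e) / Q e})

noncomputable def D2div {E : Type*} [Fintype E] (P Q : E → ℝ) : ℝ :=
  Real.log (∑ e, P e ^ 2 / Q e)

noncomputable def pushHash {B : Type*} (f : A → B) (P : A × E → ℝ) : B × E → ℝ :=
  fun be => ∑ a, (if f a = be.1 then P (a, be.2) else 0)

noncomputable def Delta_d2 (M ε : ℝ) (P : A × E → ℝ) : ℝ :=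
  sInf {x | ∃ (Q : E → ℝ) (P' : A × E → ℝ), IsDist Q ∧ (∀ e, 0 < Q e) ∧ IsSubDist P' ∧
    x = 2 * l1 P P' + Real.sqrt ε * Real.sqrt M * Real.exp (-H2cond P' Q / 2)}

noncomputable def Delta_I2 (M ε : ℝ) (P : A × E → ℝ) : ℝ :=
  sInf {x | ∃ P' : A × E → ℝ, IsSubDist P' ∧ (∀ e, margE P' e ≤ margE P e) ∧
    x = eta (l1 P P') (Real.log M) + ε * M * Real.exp (-H2cond P' (margE P))}

noncomputable def Delta_dmin (M ε : ℝ) (P : A × E → ℝ) : ℝ :=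
  sInf {x | ∃ (Q : E → ℝ) (P' : A × E → ℝ), IsDist Q ∧ (∀ e, 0 < Q e) ∧ IsSubDist P' ∧
    x = 2 * l1 P P' + Real.sqrt ε * Real.sqrt M * Real.exp (-Hmin P' Q / 2)}

noncomputable def Delta_Imin (M ε : ℝ) (P : A × E → ℝ) : ℝ :=
  sInf {x | ∃ P' : A × E → ℝ, IsSubDist P' ∧ (∀ e, margE P' e ≤ margE P e) ∧
    x = eta (l1 P P') (Real.log M) + ε * M * Real.exp (-Hmin P' (margE P))}

noncomputable def DeltaBar_Imin (M ε : ℝ) (P : A × E → ℝ) : ℝ :=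
  sInf {x | ∃ P' : A × E → ℝ, IsSubDist P' ∧ (∀ e, margE P' e ≤ margE P e) ∧
    x = eta (l1 P P') (Real.log M) + Real.log (1 + ε * M * Real.exp (-Hmin P' (margE P)))}

noncomputable def Pn (P : A × E → ℝ) (n : ℕ) : (Fin n → A) × (Fin n → E) → ℝ :=
  fun ae => ∏ i, P (ae.1 i, ae.2 i)

end Hayashi

/-!
Write `g e = (∑ a, P (a, e) ^ (1 + s)) ^ (1 / (1 + s))`. The sum inside the logarithm of
`condRenyi P Q s` is `∑ e, g e ^ (1 + s) * Q e ^ (-s) = ∑ e, Q e * (g e / Q e) ^ (1 + s)`.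
Since `x ↦ x ^ (1 + s)` is convex for `0 ≤ s` and concave for `-1 < s ≤ 0`, Jensen's inequality
bounds it below, resp. above, by `(∑ e, g e) ^ (1 + s)`, with equality at `Q ∝ g`. The sign of
the prefactor `-1 / s` turns both cases into the same upper bound on `condRenyi P Q s`.
-/

lemma mul_div_rpow_eq_rpow_mul_rpow_neg {w g : ℝ} (hw : 0 < w) (hg : 0 ≤ g) (s : ℝ) :
    w * (g / w) ^ (1 + s) = g ^ (1 + s) * w ^ (-s) := by
  rw [div_rpow hg hw.le, rpow_neg hw.le, rpow_add hw, rpow_one]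
  have := (rpow_pos_of_pos hw s).ne'
  field_simp

section

variable {ι : Type*} (t : Finset ι) {w g : ι → ℝ}

lemma rpow_sum_le_sum_rpow_mul_rpow_neg (hw : ∀ i ∈ t, 0 < w i) (hw1 : ∑ i ∈ t, w i = 1)
    (hg : ∀ i ∈ t, 0 ≤ g i) {s : ℝ} (hs : 0 ≤ s) :
    (∑ i ∈ t, g i) ^ (1 + s) ≤ ∑ i ∈ t, g i ^ (1 + s) * w i ^ (-s) := by
  have jensen := rpow_arith_mean_le_arith_mean_rpow t w (fun i => g i / w i)
    (fun i hi => (hw i hi).le) hw1 (fun i hi => div_nonneg (hg i hi) (hw i hi).le)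
    (le_add_of_nonneg_right hs)
  rwa [sum_congr rfl fun i hi => mul_div_cancel₀ (g i) (hw i hi).ne',
    sum_congr rfl fun i hi => mul_div_rpow_eq_rpow_mul_rpow_neg (hw i hi) (hg i hi) s] at jensen

lemma sum_rpow_mul_rpow_neg_le_rpow_sum (hw : ∀ i ∈ t, 0 < w i) (hw1 : ∑ i ∈ t, w i = 1)
    (hg : ∀ i ∈ t, 0 ≤ g i) {s : ℝ} (hs₁ : -1 ≤ s) (hs₀ : s ≤ 0) :
    ∑ i ∈ t, g i ^ (1 + s) * w i ^ (-s) ≤ (∑ i ∈ t, g i) ^ (1 + s) := by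
  have jensen := (concaveOn_rpow (p := 1 + s) (by linarith) (by linarith)).le_map_sum
    (fun i hi => (hw i hi).le) hw1 (p := fun i => g i / w i)
    (fun i hi => div_nonneg (hg i hi) (hw i hi).le)
  simp only [smul_eq_mul] at jensen
  rwa [sum_congr rfl fun i hi => mul_div_cancel₀ (g i) (hw i hi).ne',
    sum_congr rfl fun i hi => mul_div_rpow_eq_rpow_mul_rpow_neg (hw i hi) (hg i hi) s] at jensen

lemma sum_rpow_mul_div_sum_rpow_neg (hg : ∀ i ∈ t, 0 < g i) (ht : t.Nonempty) (s : ℝ) :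
    ∑ i ∈ t, g i ^ (1 + s) * (g i / ∑ j ∈ t, g j) ^ (-s) = (∑ i ∈ t, g i) ^ (1 + s) := by
  have hT : 0 < ∑ j ∈ t, g j := sum_pos hg ht
  calc ∑ i ∈ t, g i ^ (1 + s) * (g i / ∑ j ∈ t, g j) ^ (-s)
      = ∑ i ∈ t, g i / (∑ j ∈ t, g j) * (∑ j ∈ t, g j) ^ (1 + s) := by
        refine sum_congr rfl fun i hi => ?_
        rw [← mul_div_rpow_eq_rpow_mul_rpow_neg (div_pos (hg i hi) hT) (hg i hi).le,
          div_div_cancel₀ (hg i hi).ne']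
    _ = (∑ i ∈ t, g i) ^ (1 + s) := by rw [← sum_mul, ← sum_div, div_self hT.ne', one_mul]

end

namespace Hayashi

variable {A E : Type*} [Fintype A]

noncomputable def rowNorm (P : A × E → ℝ) (s : ℝ) (e : E) : ℝ :=
  (∑ a, P (a, e) ^ (1 + s)) ^ (1 / (1 + s))

lemma rowNorm_rpow {P : A × E → ℝ} {s : ℝ} (hP : ∀ x, 0 ≤ P x) (hs : 1 + s ≠ 0) (e : E) :
    rowNorm P s e ^ (1 + s) = ∑ a, P (a, e) ^ (1 + s) := by
  rw [rowNorm, ← rpow_mul (sum_nonneg fun a _ => rpow_nonneg (hP _) _),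
    one_div_mul_cancel hs, rpow_one]

lemma rowNorm_pos {P : A × E → ℝ} {s : ℝ} (hP : ∀ x, 0 ≤ P x) {e : E} (he : 0 < margE P e) :
    0 < rowNorm P s e := by
  obtain ⟨a, -, ha⟩ :=
    exists_lt_of_sum_lt (by simpa [margE] using he : ∑ a, (0 : ℝ) < ∑ a, P (a, e))
  have hpos : 0 < ∑ a, P (a, e) ^ (1 + s) :=
    sum_pos' (fun a _ => rpow_nonneg (hP _) _) ⟨a, mem_univ a, rpow_pos_of_pos ha _⟩
  exact rpow_pos_of_pos hpos _

variable [Fintype E]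

noncomputable def optimalQ (P : A × E → ℝ) (s : ℝ) (e : E) : ℝ :=
  rowNorm P s e / ∑ e', rowNorm P s e'

variable {P : A × E → ℝ} {s : ℝ}

lemma condRenyi_eq_log_sum_rowNorm (hP : ∀ x, 0 ≤ P x) (hs : 1 + s ≠ 0) (Q : E → ℝ) :
    condRenyi P Q s = -1 / s * log (∑ e, rowNorm P s e ^ (1 + s) * Q e ^ (-s)) := by
  simp only [condRenyi, rowNorm_rpow hP hs, sum_mul]
  rw [sum_comm]

lemma optimalQ_pos [Nonempty E] (hP : ∀ x, 0 ≤ P x) (hPE : ∀ e, 0 < margE P e) (e : E) :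
    0 < optimalQ P s e :=
  div_pos (rowNorm_pos hP (hPE e)) (sum_pos (fun e _ => rowNorm_pos hP (hPE e)) univ_nonempty)

lemma isDist_optimalQ [Nonempty E] (hP : ∀ x, 0 ≤ P x) (hPE : ∀ e, 0 < margE P e) :
    IsDist (optimalQ P s) := by
  refine ⟨fun e => (optimalQ_pos hP hPE e).le, ?_⟩
  unfold optimalQ
  rw [← sum_div, div_self (sum_pos (fun e _ => rowNorm_pos hP (hPE e)) univ_nonempty).ne']

lemma sum_rowNorm_rpow_mul_optimalQ [Nonempty E] (hP : ∀ x, 0 ≤ P x)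
    (hPE : ∀ e, 0 < margE P e) :
    ∑ e, rowNorm P s e ^ (1 + s) * optimalQ P s e ^ (-s) = (∑ e, rowNorm P s e) ^ (1 + s) :=
  sum_rpow_mul_div_sum_rpow_neg univ (fun e _ => rowNorm_pos hP (hPE e)) univ_nonempty s

lemma condRenyi_optimalQ [Nonempty E] (hP : ∀ x, 0 ≤ P x) (hPE : ∀ e, 0 < margE P e)
    (hs : -1 < s) :
    condRenyi P (optimalQ P s) s = -((1 + s) / s) * log (∑ e, rowNorm P s e) := by
  rw [condRenyi_eq_log_sum_rowNorm hP (by linarith), sum_rowNorm_rpow_mul_optimalQ hP hPE,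
    log_rpow (sum_pos (fun e _ => rowNorm_pos hP (hPE e)) univ_nonempty)]
  ring

lemma condRenyi_le_condRenyi_optimalQ [Nonempty E] (hP : ∀ x, 0 ≤ P x)
    (hPE : ∀ e, 0 < margE P e) (hs : -1 < s) {Q : E → ℝ} (hQ : IsDist Q) (hQpos : ∀ e, 0 < Q e) :
    condRenyi P Q s ≤ condRenyi P (optimalQ P s) s := by
  have hnorm : ∀ e ∈ univ, 0 ≤ rowNorm P s e := fun e _ => (rowNorm_pos hP (hPE e)).le
  have hS : 0 < ∑ e, rowNorm P s e ^ (1 + s) * Q e ^ (-s) :=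
    sum_pos (fun e _ => mul_pos (rpow_pos_of_pos (rowNorm_pos hP (hPE e)) _)
      (rpow_pos_of_pos (hQpos e) _)) univ_nonempty
  have hs' : 1 + s ≠ 0 := by linarith
  rw [condRenyi_eq_log_sum_rowNorm hP hs', condRenyi_eq_log_sum_rowNorm hP hs',
    sum_rowNorm_rpow_mul_optimalQ hP hPE]
  rcases le_or_gt s 0 with hs0 | hs0
  · exact mul_le_mul_of_nonneg_left (log_le_log hS
      (sum_rpow_mul_rpow_neg_le_rpow_sum univ (fun e _ => hQpos e) hQ.2 hnorm hs.le hs0))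
      (div_nonneg_of_nonpos (by norm_num) hs0)
  · exact mul_le_mul_of_nonpos_left (log_le_log
      (rpow_pos_of_pos (sum_pos (fun e _ => rowNorm_pos hP (hPE e)) univ_nonempty) _)
      (rpow_sum_le_sum_rpow_mul_rpow_neg univ (fun e _ => hQpos e) hQ.2 hnorm hs0.le))
      (div_nonpos_of_nonpos_of_nonneg (by norm_num) hs0.le)

lemma condRenyiUp_eq_condRenyi_optimalQ [Nonempty E] (hP : ∀ x, 0 ≤ P x)
    (hPE : ∀ e, 0 < margE P e) (hs : -1 < s) :
    condRenyiUp P s = condRenyi P (optimalQ P s) s := by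
  refine IsGreatest.csSup_eq ⟨⟨_, isDist_optimalQ hP hPE, optimalQ_pos hP hPE, rfl⟩, ?_⟩
  rintro _ ⟨Q, hQ, hQpos, rfl⟩
  exact condRenyi_le_condRenyi_optimalQ hP hPE hs hQ hQpos

theorem statement0_general {A E : Type*} [Fintype A] [Fintype E] [Nonempty E]
    (P : A × E → ℝ) (hP : IsSubDist P) (hPE : ∀ e, 0 < margE P e)
    (s : ℝ) (hs : -1 < s) :
    condRenyiUp P s =
      -((1 + s) / s) *
        Real.log (∑ e, (∑ a, P (a, e) ^ (1 + s)) ^ (1 / (1 + s))) ∧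
    IsDist (fun e : E => (∑ a, P (a, e) ^ (1 + s)) ^ (1 / (1 + s)) /
        ∑ e', (∑ a, P (a, e') ^ (1 + s)) ^ (1 / (1 + s))) ∧
    (∀ e : E, 0 < (∑ a, P (a, e) ^ (1 + s)) ^ (1 / (1 + s)) /
        ∑ e', (∑ a, P (a, e') ^ (1 + s)) ^ (1 / (1 + s))) ∧
    condRenyi P
        (fun e : E => (∑ a, P (a, e) ^ (1 + s)) ^ (1 / (1 + s)) /
          ∑ e', (∑ a, P (a, e') ^ (1 + s)) ^ (1 / (1 + s))) s =
      condRenyiUp P s := by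
  have hup := condRenyiUp_eq_condRenyi_optimalQ hP.1 hPE hs
  exact ⟨hup.trans (condRenyi_optimalQ hP.1 hPE hs), isDist_optimalQ hP.1 hPE,
    optimalQ_pos hP.1 hPE, hup.symm⟩

/-- Lemma `cor1` of the paper: closed form for `H^↑_{1+s}` and attainment of the
supremum at the explicit distribution `Q_E`. -/
theorem statement0 {A E : Type*} [Fintype A] [Fintype E] [Nonempty A] [Nonempty E]
    (P : A × E → ℝ) (hP : IsSubDist P) (hPE : ∀ e, 0 < margE P e)
    (s : ℝ) (hs : -1 < s) (hs0 : s ≠ 0) :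
    condRenyiUp P s =
      -((1 + s) / s) *
        Real.log (∑ e, (∑ a, P (a, e) ^ (1 + s)) ^ (1 / (1 + s))) ∧
    IsDist (fun e : E => (∑ a, P (a, e) ^ (1 + s)) ^ (1 / (1 + s)) /
        ∑ e', (∑ a, P (a, e') ^ (1 + s)) ^ (1 / (1 + s))) ∧
    (∀ e : E, 0 < (∑ a, P (a, e) ^ (1 + s)) ^ (1 / (1 + s)) /
        ∑ e', (∑ a, P (a, e') ^ (1 + s)) ^ (1 / (1 + s))) ∧
    condRenyi P
        (fun e : E => (∑ a, P (a, e) ^ (1 + s)) ^ (1 / (1 + s)) /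
          ∑ e', (∑ a, P (a, e') ^ (1 + s)) ^ (1 / (1 + s))) s =
      condRenyiUp P s :=
  statement0_general P hP hPE s hs
end Hayashi
end

section
/- Let q = p^k be a power of a prime p, let ℰ be a finite nonempty set, let P_{A,E} be a joint sub-distribution on 𝔽_q^n × ℰ, let Q_E be a normalized distribution on ℰ with full support, and let (W_x)_{x∈𝒳} be a δ-biased ensemble of random variables on 𝔽_q^n. Then E_X d₂(A|E|P_{A,E} ∗ P_{W_X}‖Q_E) ≤ δ² · d₂(A|E|P_{A,E}‖Q_E) ≤ δ² · e^{−H₂(A|E|P_{A,E}‖Q_E)}, where (P_{A,E} ∗ P_{W_x})(a,e) := ∑_{w∈𝔽_q^n} P_{W_x}(w)·P_{A,E}(a−w, e). -/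
open Real Finset Filter

attribute [local instance] Classical.propDecidable

namespace Hayashi

variable {A E : Type*} [Fintype A] [Fintype E]

noncomputable def omg (p : ℕ) (t : ZMod p) : ℂ :=
  Complex.exp (2 * Real.pi * Complex.I * (t.val : ℂ) / (p : ℂ))

noncomputable def unifOn {n : ℕ} {F : Type*} [Field F] [Fintype F]
    (C : Submodule F (Fin n → F)) : (Fin n → F) → ℝ :=
  fun w => if w ∈ C then (Nat.card C : ℝ)⁻¹ else 0

/-!
For each `e`, the function `f_e a = P (a, e) - P_E(e) / |𝔽_q^n|` has mean zero and
`d₂ = ∑_e ‖f_e‖² / Q e`. Convolving with `W_x` preserves the marginal `P_E` and turns `f_e` into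
`W_x ∗ f_e`. The characters `a ↦ ω_p^{y·a}` are orthogonal because the form is nondegenerate, so
by Parseval `‖W_x ∗ f_e‖²` is the mean over `y` of `|Ŵ_x(y)|² |f̂_e(y)|²`; the term `y = 0` vanishes
since `f̂_e(0) = ∑ f_e = 0`, and averaging over `x` bounds each other term by `δ² |f̂_e(y)|²`.
The second inequality is the variance bound `‖f_e‖² ≤ ∑_a P (a, e)²`.
-/

lemma omg_eq_stdAddChar {p : ℕ} [NeZero p] (t : ZMod p) : omg p t = ZMod.stdAddChar t := by
  rw [ZMod.stdAddChar_apply, ZMod.toCircle_apply, omg]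

section PiPairing

variable {ι F M : Type*} [Fintype ι] [AddCommMonoid F] [AddCommMonoid M]

def piPairing (B : F →+ F →+ M) : (ι → F) →+ (ι → F) →+ M where
  toFun y :=
    { toFun := fun w => ∑ j, B (y j) (w j)
      map_zero' := by simp
      map_add' := by simp [sum_add_distrib] }
  map_zero' := by ext; simp
  map_add' := by intros; ext; simp [sum_add_distrib]

lemma piPairing_apply (B : F →+ F →+ M) (y w : ι → F) :
    piPairing B y w = ∑ j, B (y j) (w j) := rfl

lemma piPairing_separating {B : F →+ F →+ M} (hB : ∀ c, (∀ x, B x c = 0) → c = 0) (c : ι → F)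
    (hc : ∀ y, piPairing B y c = 0) : c = 0 := by
  classical
  funext j
  refine hB _ fun x => ?_
  have hsingle := hc (Pi.single j x)
  rwa [piPairing_apply, sum_eq_single j (fun i _ hi => by simp [Pi.single_eq_of_ne hi])
    (by simp), Pi.single_eq_same] at hsingle

end PiPairing

noncomputable def centered (f : A → ℝ) (a : A) : ℝ :=
  f a - (∑ b, f b) / Fintype.card A

lemma sum_centered [Nonempty A] (f : A → ℝ) : ∑ a, centered f a = 0 := by
  simp only [centered, sum_sub_distrib, sum_const, card_univ, nsmul_eq_mul]
  rw [mul_div_cancel₀ _ (Nat.cast_ne_zero.mpr Fintype.card_ne_zero), sub_self]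

lemma sum_centered_sq_le (f : A → ℝ) : ∑ a, centered f a ^ 2 ≤ ∑ a, f a ^ 2 := by
  set m := ∑ a, f a
  set K : ℝ := (Fintype.card A : ℝ)
  have hexp : ∑ a, centered f a ^ 2 = ∑ a, f a ^ 2 - 2 * (m / K) * m + K * (m / K) ^ 2 := by
    simp only [centered, sub_sq, sum_add_distrib, sum_sub_distrib, ← sum_mul, ← mul_sum,
      sum_const, card_univ, nsmul_eq_mul, m, K]
    ring
  rcases eq_or_ne K 0 with hK | hK
  · simp [hexp, hK]
  · have hmean : K * (m / K) ^ 2 = m / K * m := by field_simp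
    have hnonneg : 0 ≤ m / K * m := by rw [← hmean]; positivity
    linarith

section Convolution

variable {G R : Type*} [AddCommGroup G] [Fintype G]

def conv [Semiring R] (g f : G → R) (a : G) : R := ∑ w, g w * f (a - w)

lemma sum_conv [Semiring R] (g f : G → R) : ∑ a, conv g f a = (∑ w, g w) * ∑ a, f a := by
  rw [sum_mul_sum]
  simp only [conv]
  rw [sum_comm]
  exact sum_congr rfl fun w _ => Fintype.sum_equiv (Equiv.subRight w) _ _ fun a => rfl

lemma centered_conv {W : G → ℝ} (hW : ∑ w, W w = 1) (f : G → ℝ) :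
    centered (conv W f) = conv W (centered f) := by
  have hsum : ∑ b, conv W f b = ∑ b, f b := by rw [sum_conv, hW, one_mul]
  funext a
  rw [centered, hsum]
  simp only [centered, conv, mul_sub, sum_sub_distrib, ← sum_mul, hW, one_mul]

lemma sum_conv_mul_addChar [CommRing R] (ψ : AddChar G R) (g f : G → R) :
    ∑ a, conv g f a * ψ a = (∑ w, g w * ψ w) * ∑ a, f a * ψ a := by
  rw [sum_mul_sum]
  simp only [conv, sum_mul]
  rw [sum_comm]
  refine sum_congr rfl fun w _ => Fintype.sum_equiv (Equiv.subRight w) _ _ fun a => ?_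
  have hψ := ψ.map_add_eq_mul w (a - w)
  rw [add_sub_cancel] at hψ
  rw [Equiv.subRight_apply, hψ]
  ring

end Convolution

section Pairing

variable {G : Type*} [AddCommGroup G] [Fintype G] {N : ℕ} [NeZero N] (D : G →+ G →+ ZMod N)

lemma sum_stdAddChar_pairing (hD : ∀ a, (∀ y, D y a = 0) → a = 0) (a : G) :
    ∑ y, ZMod.stdAddChar (D y a) = if a = 0 then (Fintype.card G : ℂ) else 0 := by
  split_ifs with ha
  · simp [ha]
  · obtain ⟨y, hy⟩ := not_forall.mp (mt (hD a) ha)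
    refine AddChar.sum_eq_zero_of_ne_one (ψ := ZMod.stdAddChar.compAddMonoidHom (D.flip a)) ?_
    refine AddChar.ne_one_iff.mpr ⟨y, fun h => hy ?_⟩
    rw [AddChar.compAddMonoidHom_apply, AddMonoidHom.flip_apply] at h
    exact ZMod.injective_stdAddChar (h.trans (AddChar.map_zero_eq_one _).symm)

lemma sum_normSq_sum_mul_stdAddChar (hD : ∀ a, (∀ y, D y a = 0) → a = 0) (f : G → ℂ) :
    ∑ y, Complex.normSq (∑ a, f a * ZMod.stdAddChar (D y a)) =
      Fintype.card G * ∑ a, Complex.normSq (f a) := by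
  have key : ∀ y, (Complex.normSq (∑ a, f a * ZMod.stdAddChar (D y a)) : ℂ) =
      ∑ a, ∑ b, f a * (starRingEnd ℂ) (f b) * ZMod.stdAddChar (D y (a - b)) := by
    intro y
    rw [← Complex.mul_conj, map_sum, sum_mul_sum]
    refine sum_congr rfl fun a _ => sum_congr rfl fun b _ => ?_
    rw [map_mul, ← AddChar.map_neg_eq_conj, ← map_neg, sub_eq_add_neg, map_add,
      AddChar.map_add_eq_mul]
    ring
  apply Complex.ofReal_injective
  push_cast
  calc ∑ y, (Complex.normSq (∑ a, f a * ZMod.stdAddChar (D y a)) : ℂ)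
      = ∑ a, ∑ b, f a * (starRingEnd ℂ) (f b) * ∑ y, ZMod.stdAddChar (D y (a - b)) := by
        simp_rw [key, mul_sum]
        rw [sum_comm]
        exact sum_congr rfl fun a _ => sum_comm
    _ = Fintype.card G * ∑ a, (Complex.normSq (f a) : ℂ) := by
        simp only [sum_stdAddChar_pairing D hD, sub_eq_zero, mul_ite, mul_zero, sum_ite_eq,
          mem_univ, if_true, mul_sum]
        exact sum_congr rfl fun a _ => by rw [Complex.mul_conj, mul_comm]

lemma sum_normSq_sum_ofReal_mul_stdAddChar (hD : ∀ a, (∀ y, D y a = 0) → a = 0) (f : G → ℝ) :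
    ∑ y, Complex.normSq (∑ a, (f a : ℂ) * ZMod.stdAddChar (D y a)) =
      Fintype.card G * ∑ a, f a ^ 2 := by
  simpa [Complex.normSq_ofReal, sq] using sum_normSq_sum_mul_stdAddChar D hD (fun a => (f a : ℂ))

lemma sum_mul_sum_sq_conv_le (hD : ∀ a, (∀ y, D y a = 0) → a = 0) {X : Type*} [Fintype X]
    (μ : X → ℝ) (W : X → G → ℝ) (δ : ℝ)
    (hbias : ∀ y ≠ 0,
      ∑ x, μ x * Complex.normSq (∑ w, (W x w : ℂ) * ZMod.stdAddChar (D y w)) ≤ δ ^ 2)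
    (f : G → ℝ) (hf : ∑ a, f a = 0) :
    ∑ x, μ x * ∑ a, conv (W x) f a ^ 2 ≤ δ ^ 2 * ∑ a, f a ^ 2 := by
  set fhat : G → ℝ := fun y => Complex.normSq (∑ a, (f a : ℂ) * ZMod.stdAddChar (D y a))
  have hfhat0 : fhat 0 = 0 := by simp [fhat, ← Complex.ofReal_sum, hf]
  have hG : (0 : ℝ) < Fintype.card G := by positivity
  rw [← mul_le_mul_iff_right₀ hG]
  calc (Fintype.card G : ℝ) * ∑ x, μ x * ∑ a, conv (W x) f a ^ 2
      = ∑ x, μ x * ∑ y,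
          Complex.normSq (∑ w, (W x w : ℂ) * ZMod.stdAddChar (D y w)) * fhat y := by
        rw [mul_sum]
        refine sum_congr rfl fun x _ => ?_
        rw [mul_left_comm, ← sum_normSq_sum_ofReal_mul_stdAddChar D hD]
        refine congrArg _ (sum_congr rfl fun y _ => ?_)
        have hconv := sum_conv_mul_addChar (ZMod.stdAddChar.compAddMonoidHom (D y))
          (fun w => (W x w : ℂ)) (fun a => (f a : ℂ))
        simp only [AddChar.compAddMonoidHom_apply, conv] at hconv
        simp only [conv]
        push_cast
        rw [hconv, Complex.normSq_mul]
    _ = ∑ y, (∑ x, μ x * Complex.normSq (∑ w, (W x w : ℂ) * ZMod.stdAddChar (D y w))) *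
          fhat y := by
        simp_rw [mul_sum, sum_mul, mul_assoc]
        exact sum_comm
    _ ≤ ∑ y, δ ^ 2 * fhat y := by
        refine sum_le_sum fun y _ => ?_
        rcases eq_or_ne y 0 with rfl | hy
        · simp [hfhat0]
        · exact mul_le_mul_of_nonneg_right (hbias y hy) (Complex.normSq_nonneg _)
    _ = Fintype.card G * (δ ^ 2 * ∑ a, f a ^ 2) := by
        rw [← mul_sum, sum_normSq_sum_ofReal_mul_stdAddChar D hD]
        ring

end Pairing

lemma d2cond_eq_sum_centered (P : A × E → ℝ) (Q : E → ℝ) :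
    d2cond P Q = ∑ e, (∑ a, centered (fun a => P (a, e)) a ^ 2) / Q e := by
  rw [d2cond, sum_comm]
  simp only [sum_div, centered, margE]

lemma d2cond_le_exp_neg_H2cond {Q : E → ℝ} (hQ : ∀ e, 0 ≤ Q e) (P : A × E → ℝ) :
    d2cond P Q ≤ Real.exp (-H2cond P Q) := by
  rw [H2cond, neg_neg]
  refine le_trans ?_ (Real.le_exp_log _)
  rw [d2cond_eq_sum_centered, sum_comm]
  refine sum_le_sum fun e _ => ?_
  rw [← sum_div]
  exact div_le_div_of_nonneg_right (sum_centered_sq_le _) (hQ e)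

lemma sum_mul_d2cond_conv_le {G : Type*} [AddCommGroup G] [Fintype G] {N : ℕ} [NeZero N]
    (D : G →+ G →+ ZMod N) (hD : ∀ a, (∀ y, D y a = 0) → a = 0) {Q : E → ℝ} (hQ : ∀ e, 0 ≤ Q e)
    {X : Type*} [Fintype X] (μ : X → ℝ) (W : X → G → ℝ) (hW : ∀ x, ∑ w, W x w = 1) (δ : ℝ)
    (hbias : ∀ y ≠ 0,
      ∑ x, μ x * Complex.normSq (∑ w, (W x w : ℂ) * ZMod.stdAddChar (D y w)) ≤ δ ^ 2)
    (P : G × E → ℝ) :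
    ∑ x, μ x * d2cond (fun ae : G × E => conv (W x) (fun a => P (a, ae.2)) ae.1) Q ≤
      δ ^ 2 * d2cond P Q := by
  calc ∑ x, μ x * d2cond (fun ae : G × E => conv (W x) (fun a => P (a, ae.2)) ae.1) Q
      = ∑ e, (∑ x, μ x * ∑ a, conv (W x) (centered fun a => P (a, e)) a ^ 2) / Q e := by
        simp only [d2cond_eq_sum_centered, centered_conv (hW _), mul_sum, sum_div, mul_div_assoc]
        exact sum_comm
    _ ≤ ∑ e, δ ^ 2 * (∑ a, centered (fun a => P (a, e)) a ^ 2) / Q e := by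
        refine sum_le_sum fun e _ => div_le_div_of_nonneg_right ?_ (hQ e)
        exact sum_mul_sum_sq_conv_le D hD μ W δ hbias _ (sum_centered _)
    _ = δ ^ 2 * d2cond P Q := by
        rw [d2cond_eq_sum_centered, mul_sum]
        simp only [mul_div_assoc]

theorem statement3_general
    (p n : ℕ) [Fact p.Prime]
    (F : Type*) [Field F] [Fintype F]
    (B : F → F → ZMod p)
    (hB1 : ∀ x y z : F, B (x + y) z = B x z + B y z)
    (hB2 : ∀ x y z : F, B x (y + z) = B x y + B x z)
    (hBr : ∀ y : F, (∀ x, B x y = 0) → y = 0)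
    (E : Type*) [Fintype E]
    (P : (Fin n → F) × E → ℝ)
    (Q : E → ℝ) (hQ : IsDist Q)
    (X : Type*) [Fintype X] (μ : X → ℝ)
    (W : X → (Fin n → F) → ℝ) (hW : ∀ x, IsDist (W x)) (δ : ℝ)
    (hbias : ∀ y : Fin n → F, y ≠ 0 →
      ∑ x, μ x * Complex.normSq (∑ w, (W x w : ℂ) * omg p (∑ j, B (y j) (w j))) ≤ δ ^ 2) :
    (∑ x, μ x *
        d2cond (fun ae : (Fin n → F) × E => ∑ w, W x w * P (ae.1 - w, ae.2)) Q) ≤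
      δ ^ 2 * d2cond P Q ∧
    δ ^ 2 * d2cond P Q ≤ δ ^ 2 * Real.exp (-H2cond P Q) := by
  let B' : F →+ F →+ ZMod p :=
    AddMonoidHom.mk' (fun x => AddMonoidHom.mk' (B x) (hB2 x)) fun x y => by
      ext z; exact hB1 x y z
  have hbias' : ∀ y ≠ 0, ∑ x, μ x *
      Complex.normSq (∑ w, (W x w : ℂ) * ZMod.stdAddChar (piPairing B' y w)) ≤ δ ^ 2 := by
    simpa [← omg_eq_stdAddChar, piPairing_apply, B'] using hbias
  exact ⟨sum_mul_d2cond_conv_le (piPairing B') (piPairing_separating hBr) hQ.1 μ W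
      (fun x => (hW x).2) δ hbias' P,
    mul_le_mul_of_nonneg_left (d2cond_le_exp_neg_H2cond hQ.1 P) (sq_nonneg δ)⟩

/-- Proposition `Lem6-1` (Dodis–Smith) of the paper: a `δ`-biased ensemble of
random variables on `𝔽_q^n`, convolved with a joint sub-distribution, decreases
`d₂` by a factor `δ²`, which is further bounded by `δ²·e^{-H₂}`. -/
theorem statement3
    (p k n q : ℕ) [Fact p.Prime] (hk : 0 < k) (hq : q = p ^ k)
    (F : Type*) [Field F] [Fintype F] (hF : Fintype.card F = q)
    (B : F → F → ZMod p)
    (hB1 : ∀ x y z : F, B (x + y) z = B x z + B y z)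
    (hB2 : ∀ x y z : F, B x (y + z) = B x y + B x z)
    (hBl : ∀ x : F, (∀ y, B x y = 0) → x = 0)
    (hBr : ∀ y : F, (∀ x, B x y = 0) → y = 0)
    (E : Type*) [Fintype E] [Nonempty E]
    (P : (Fin n → F) × E → ℝ) (hP : IsSubDist P)
    (Q : E → ℝ) (hQ : IsDist Q) (hQpos : ∀ e, 0 < Q e)
    (X : Type*) [Fintype X] (μ : X → ℝ) (hμ : IsDist μ)
    (W : X → (Fin n → F) → ℝ) (hW : ∀ x, IsDist (W x)) (δ : ℝ)
    (hbias : ∀ y : Fin n → F, y ≠ 0 →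
      ∑ x, μ x * Complex.normSq (∑ w, (W x w : ℂ) * omg p (∑ j, B (y j) (w j))) ≤ δ ^ 2) :
    (∑ x, μ x *
        d2cond (fun ae : (Fin n → F) × E => ∑ w, W x w * P (ae.1 - w, ae.2)) Q) ≤
      δ ^ 2 * d2cond P Q ∧
    δ ^ 2 * d2cond P Q ≤ δ ^ 2 * Real.exp (-H2cond P Q) :=
  statement3_general p n F B hB1 hB2 hBr E P Q hQ X μ W hW δ hbias

end Hayashi
end

section
/- Let P_{A,E} be a joint sub-distribution on 𝒜 × ℰ, let Q_E be a normalized distribution on ℰ with full support, let R ∈ ℝ, and set S_R := {(a,e) ∈ 𝒜 × ℰ : P_{A,E}(a,e) > e^{−R}·Q_E(e)}. Then min{‖P_{A,E} − P'‖₁ : P' a sub-distribution on 𝒜 × ℰ with H_min(A|E|P'‖Q_E) ≥ R} = min{‖P_{A,E} − P'‖₁ : P' a sub-distribution with H_min(A|E|P'‖Q_E) ≥ R and P'(a,e) ≤ P_{A,E}(a,e) for all (a,e)} = ∑_{(a,e)∈S_R} P_{A,E}(a,e) − e^{−R}·∑_{(a,e)∈S_R} Q_E(e). Moreover, for every c >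 1, (1 − 1/c)·∑_{(a,e): P_{A,E}(a,e) > c·e^{−R}·Q_E(e)} P_{A,E}(a,e) ≤ ∑_{(a,e)∈S_R} P_{A,E}(a,e) − e^{−R}·∑_{(a,e)∈S_R} Q_E(e) ≤ ∑_{(a,e)∈S_R} P_{A,E}(a,e). -/
/-!
For `P' ≠ 0`, `H_min(A|E|P'‖Q) ≥ R` says exactly that `P' ≤ e^{-R} Q` pointwise. Hence every
admissible `P'` is at `ℓ¹`-distance at least `∑ (P - e^{-R} Q)⁺` from `P`, and the clipped
sub-distribution `min P (e^{-R} Q)`, which lies below `P`, attains this bound. Where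
`P > c e^{-R} Q`, the excess `P - e^{-R} Q` is at least `(1 - 1/c) P`, giving the lower tail bound.
-/

open Real Finset Filter

attribute [local instance] Classical.propDecidable

namespace Hayashi

variable {A E : Type*} [Fintype A] [Fintype E]

lemma max_sub_zero_le_abs_sub {p p' t : ℝ} (h : p' ≤ t) : max (p - t) 0 ≤ |p - p'| :=
  max_le (by linarith [le_abs_self (p - p')]) (abs_nonneg _)

lemma abs_sub_min_eq_max_sub_zero (p t : ℝ) : |p - min p t| = max (p - t) 0 := by
  rcases le_total p t with h | h
  · rw [min_eq_left h, sub_self, abs_zero, max_eq_right (by linarith)]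
  · rw [min_eq_right h, abs_of_nonneg (by linarith), max_eq_left (by linarith)]

lemma ite_sub_mul_ite_eq_max_sub_zero (p q t : ℝ) :
    (if t * q < p then p else 0) - t * (if t * q < p then q else 0) = max (p - t * q) 0 := by
  split_ifs with h
  · rw [max_eq_left (by linarith)]
  · rw [max_eq_right (by linarith)]
    ring

lemma max_sub_zero_le_ite {p t : ℝ} (ht : 0 ≤ t) : max (p - t) 0 ≤ if t < p then p else 0 := by
  split_ifs with h
  · exact max_le (by linarith) (by linarith)
  · exact (max_eq_right (by linarith)).le

lemma one_sub_inv_mul_ite_le_max_sub_zero {c p t : ℝ} (hc : 1 < c) :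
    (1 - 1 / c) * (if c * t < p then p else 0) ≤ max (p - t) 0 := by
  split_ifs with h
  · have hpc : t ≤ p / c := by
      rw [le_div_iff₀ (by linarith)]
      linarith
    calc (1 - 1 / c) * p = p - p / c := by ring
      _ ≤ p - t := by linarith
      _ ≤ max (p - t) 0 := le_max_left _ _
  · rw [mul_zero]
    exact le_max_right _ _

section Excess

variable (P P' : A × E → ℝ) (Q : E → ℝ) (T : ℝ)

noncomputable def excess : ℝ := ∑ a, ∑ e, max (P (a, e) - T * Q e) 0

noncomputable def clip : A × E → ℝ := fun z => min (P z) (T * Q z.2)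

lemma ite_sum_sub_mul_ite_sum_eq_excess :
    (∑ a, ∑ e, (if T * Q e < P (a, e) then P (a, e) else 0)) -
        T * ∑ a, ∑ e, (if T * Q e < P (a, e) then Q e else 0) = excess P Q T := by
  simp only [excess, mul_sum, ← sum_sub_distrib, ite_sub_mul_ite_eq_max_sub_zero]

variable {P P' Q T}

lemma excess_zero_left (hTQ : ∀ e, 0 ≤ T * Q e) : excess (0 : A × E → ℝ) Q T = 0 :=
  sum_eq_zero fun _ _ => sum_eq_zero fun e _ => max_eq_right (by simpa using hTQ e)

lemma excess_le_l1 (h : ∀ a e, P' (a, e) ≤ T * Q e) : excess P Q T ≤ l1 P P' :=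
  sum_le_sum fun a _ => sum_le_sum fun e _ => max_sub_zero_le_abs_sub (h a e)

variable (P Q T) in
lemma l1_clip : l1 P (clip P Q T) = excess P Q T := by
  simp only [l1, clip, abs_sub_min_eq_max_sub_zero, excess]

lemma excess_le_ite_sum (hT : 0 ≤ T) (hQ : ∀ e, 0 ≤ Q e) :
    excess P Q T ≤ ∑ a, ∑ e, (if T * Q e < P (a, e) then P (a, e) else 0) :=
  sum_le_sum fun _ _ => sum_le_sum fun e _ => max_sub_zero_le_ite (mul_nonneg hT (hQ e))

lemma one_sub_inv_mul_ite_sum_le_excess {c : ℝ} (hc : 1 < c) :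
    (1 - 1 / c) * (∑ a, ∑ e, (if c * T * Q e < P (a, e) then P (a, e) else 0)) ≤
      excess P Q T := by
  simp only [mul_sum, mul_assoc c]
  exact sum_le_sum fun _ _ => sum_le_sum fun _ _ => one_sub_inv_mul_ite_le_max_sub_zero hc

end Excess

section MinEntropy

variable {P' : A × E → ℝ} {Q : E → ℝ} {R : ℝ}

lemma le_Hmin_iff (hQ : ∀ e, 0 < Q e) (hpos : ∃ z, 0 < P' z) :
    R ≤ Hmin P' Q ↔ ∀ a e, P' (a, e) ≤ exp (-R) * Q e := by
  obtain ⟨⟨a₀, e₀⟩, h₀⟩ := hpos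
  set s := {r | ∃ a e, 0 < Q e ∧ r = P' (a, e) / Q e}
  have hbdd : BddAbove s := (Set.finite_range fun z : A × E => P' z / Q z.2).bddAbove.mono
    (by rintro _ ⟨a, e, -, rfl⟩; exact ⟨(a, e), rfl⟩)
  have hmem : P' (a₀, e₀) / Q e₀ ∈ s := ⟨a₀, e₀, hQ e₀, rfl⟩
  have hsup : 0 < sSup s := (div_pos h₀ (hQ e₀)).trans_le (le_csSup hbdd hmem)
  rw [Hmin, le_neg, log_le_iff_le_exp hsup, csSup_le_iff hbdd ⟨_, hmem⟩]
  constructor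
  · intro h a e
    rw [← div_le_iff₀ (hQ e)]
    exact h _ ⟨a, e, hQ e, rfl⟩
  · rintro h _ ⟨a, e, -, rfl⟩
    rw [div_le_iff₀ (hQ e)]
    exact h a e

lemma le_exp_mul_of_le_Hmin (hQ : ∀ e, 0 < Q e) (hR : R ≤ Hmin P' Q)
    (a : A) (e : E) : P' (a, e) ≤ exp (-R) * Q e := by
  by_cases hpos : ∃ z, 0 < P' z
  · exact (le_Hmin_iff hQ hpos).1 hR a e
  · push Not at hpos
    exact (hpos _).trans (mul_pos (exp_pos _) (hQ e)).le

end MinEntropy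

section Optimum

variable {P : A × E → ℝ} {Q : E → ℝ}

lemma l1_nonneg (P P' : A × E → ℝ) : 0 ≤ l1 P P' :=
  sum_nonneg fun _ _ => sum_nonneg fun _ _ => abs_nonneg _

lemma excess_mem_lowerBounds (hQ : ∀ e, 0 < Q e) (R : ℝ) :
    excess P Q (exp (-R)) ∈
      lowerBounds {x | ∃ P' : A × E → ℝ, IsSubDist P' ∧ R ≤ Hmin P' Q ∧ x = l1 P P'} := by
  rintro _ ⟨P', -, hR, rfl⟩
  exact excess_le_l1 (le_exp_mul_of_le_Hmin hQ hR)

/-- `Hmin 0 Q = 0` (as `log 0 = 0`), so the clipped distribution is admissible only when `P` has a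
positive entry. -/
lemma excess_mem_of_exists_pos (hP : IsSubDist P) (hQ : ∀ e, 0 < Q e) (hpos : ∃ z, 0 < P z)
    (R : ℝ) :
    excess P Q (exp (-R)) ∈ {x | ∃ P' : A × E → ℝ, IsSubDist P' ∧ R ≤ Hmin P' Q ∧
      (∀ z, P' z ≤ P z) ∧ x = l1 P P'} := by
  have hTQ : ∀ e, 0 < exp (-R) * Q e := fun e => mul_pos (exp_pos _) (hQ e)
  obtain ⟨z₀, hz₀⟩ := hpos
  refine ⟨clip P Q (exp (-R)), ⟨fun z => le_min (hP.1 z) (hTQ z.2).le, ?_⟩, ?_,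
    fun z => min_le_left _ _, (l1_clip P Q _).symm⟩
  · exact (sum_le_sum fun z _ => min_le_left _ _).trans hP.2
  · exact (le_Hmin_iff hQ ⟨z₀, lt_min hz₀ (hTQ z₀.2)⟩).2 fun a e => min_le_right _ _

variable (Q) in
lemma sum_mul_div_card [Nonempty A] (t : ℝ) (hQ : IsDist Q) :
    ∑ _a : A, ∑ e, t * Q e / Fintype.card A = t := by
  simp only [← sum_div, ← mul_sum, hQ.2, sum_const, card_univ, nsmul_eq_mul]
  field_simp

/-- For `P = 0` and `R > 0` the infimum is not attained; it is approached by `t • (uniform ⊗ Q)`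
as `t → 0`. -/
lemma mem_l1_zero_Hmin [Nonempty A] [Nonempty E] (hQ : IsDist Q) (hQpos : ∀ e, 0 < Q e) {R t : ℝ}
    (ht : 0 < t) (ht₁ : t ≤ 1) (htR : t ≤ exp (-R)) :
    t ∈ {x | ∃ P' : A × E → ℝ, IsSubDist P' ∧ R ≤ Hmin P' Q ∧ x = l1 0 P'} := by
  set P' : A × E → ℝ := fun z => t * Q z.2 / Fintype.card A
  have hcard : (1 : ℝ) ≤ Fintype.card A := by exact_mod_cast Fintype.card_pos
  have hP'pos : ∀ z, 0 < P' z := fun z => by positivity [hQpos z.2]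
  refine ⟨P', ⟨fun z => (hP'pos z).le, ?_⟩, ?_, ?_⟩
  · rw [Fintype.sum_prod_type, sum_mul_div_card Q t hQ]
    exact ht₁
  · refine (le_Hmin_iff hQpos ⟨Classical.arbitrary _, hP'pos _⟩).2 fun a e => ?_
    calc P' (a, e) ≤ t * Q e := div_le_self (mul_pos ht (hQpos e)).le hcard
      _ ≤ exp (-R) * Q e := by gcongr; exact (hQpos e).le
  · simp only [l1, Pi.zero_apply, zero_sub, abs_neg, abs_of_pos (hP'pos _)]
    exact (sum_mul_div_card Q t hQ).symm

lemma eq_zero_of_not_exists_pos {S : Type*} {P : S → ℝ} (hP : ∀ z, 0 ≤ P z)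
    (h : ¬∃ z, 0 < P z) : P = 0 :=
  funext fun z => le_antisymm (not_lt.1 fun hz => h ⟨z, hz⟩) (hP z)

lemma sInf_l1_Hmin_eq_excess [Nonempty A] [Nonempty E] (hP : IsSubDist P) (hQ : IsDist Q)
    (hQpos : ∀ e, 0 < Q e) (R : ℝ) :
    sInf {x | ∃ P' : A × E → ℝ, IsSubDist P' ∧ R ≤ Hmin P' Q ∧ x = l1 P P'} =
      excess P Q (exp (-R)) := by
  by_cases hpos : ∃ z, 0 < P z
  · obtain ⟨P', hP', hR, -, hx⟩ := excess_mem_of_exists_pos hP hQpos hpos R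
    exact IsLeast.csInf_eq ⟨⟨P', hP', hR, hx⟩, excess_mem_lowerBounds hQpos R⟩
  obtain rfl := eq_zero_of_not_exists_pos hP.1 hpos
  have hT := exp_pos (-R)
  rw [excess_zero_left fun e => (mul_pos hT (hQpos e)).le]
  have hm : (0 : ℝ) < min 1 (exp (-R)) := lt_min one_pos hT
  refine le_antisymm ?_ (Real.sInf_nonneg ?_)
  · calc sInf _ ≤ sInf (Set.Ioc 0 (min 1 (exp (-R)))) :=
          csInf_le_csInf ⟨0, by rintro _ ⟨P', -, -, rfl⟩; exact l1_nonneg _ _⟩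
            (Set.nonempty_Ioc.2 hm) fun t ht => mem_l1_zero_Hmin hQ hQpos ht.1
              (ht.2.trans (min_le_left _ _)) (ht.2.trans (min_le_right _ _))
      _ = 0 := csInf_Ioc hm
  · rintro _ ⟨P', -, -, rfl⟩
    exact l1_nonneg _ _

lemma sInf_l1_Hmin_of_le_eq_excess (hP : IsSubDist P) (hQpos : ∀ e, 0 < Q e) (R : ℝ) :
    sInf {x | ∃ P' : A × E → ℝ, IsSubDist P' ∧ R ≤ Hmin P' Q ∧ (∀ z, P' z ≤ P z) ∧
      x = l1 P P'} = excess P Q (exp (-R)) := by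
  by_cases hpos : ∃ z, 0 < P z
  · exact IsLeast.csInf_eq ⟨excess_mem_of_exists_pos hP hQpos hpos R,
      fun _ ⟨P', hP', hR, _, hx⟩ => excess_mem_lowerBounds hQpos R ⟨P', hP', hR, hx⟩⟩
  obtain rfl := eq_zero_of_not_exists_pos hP.1 hpos
  rw [excess_zero_left fun e => (mul_pos (exp_pos _) (hQpos e)).le]
  have hsub : {x | ∃ P' : A × E → ℝ, IsSubDist P' ∧ R ≤ Hmin P' Q ∧
      (∀ z, P' z ≤ (0 : A × E → ℝ) z) ∧ x = l1 0 P'} ⊆ {0} := by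
    rintro _ ⟨P', hP', -, hle, rfl⟩
    obtain rfl : P' = 0 := funext fun z => le_antisymm (hle z) (hP'.1 z)
    simp [l1]
  rcases Set.subset_singleton_iff_eq.1 hsub with h | h <;> rw [h]
  · exact Real.sInf_empty
  · exact csInf_singleton 0

end Optimum

/-- Lemma `L8-29-1` of the paper: the minimal `ℓ¹`-distance from `P_{A,E}` to a
sub-distribution with `H_min(A|E|·‖Q_E) ≥ R` is attained under the additional
constraint `P' ≤ P`, equals an explicit tail expression, and is sandwiched by
tail probabilities. -/
theorem statement9 {A E : Type*} [Fintype A] [Fintype E] [Nonempty A] [Nonempty E]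
    (P : A × E → ℝ) (hP : IsSubDist P)
    (Q : E → ℝ) (hQ : IsDist Q) (hQpos : ∀ e, 0 < Q e) (R : ℝ) :
    (sInf {x | ∃ P' : A × E → ℝ, IsSubDist P' ∧ R ≤ Hmin P' Q ∧ x = l1 P P'} =
      sInf {x | ∃ P' : A × E → ℝ, IsSubDist P' ∧ R ≤ Hmin P' Q ∧
        (∀ z, P' z ≤ P z) ∧ x = l1 P P'}) ∧
    (sInf {x | ∃ P' : A × E → ℝ, IsSubDist P' ∧ R ≤ Hmin P' Q ∧ x = l1 P P'} =
      (∑ a, ∑ e, (if Real.exp (-R) * Q e < P (a, e) then P (a, e) else 0)) -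
        Real.exp (-R) *
          ∑ a : A, ∑ e, (if Real.exp (-R) * Q e < P (a, e) then Q e else 0)) ∧
    (∀ c : ℝ, 1 < c →
      (1 - 1 / c) *
          (∑ a, ∑ e, (if c * Real.exp (-R) * Q e < P (a, e) then P (a, e) else 0)) ≤
        (∑ a, ∑ e, (if Real.exp (-R) * Q e < P (a, e) then P (a, e) else 0)) -
          Real.exp (-R) *
            ∑ a : A, ∑ e, (if Real.exp (-R) * Q e < P (a, e) then Q e else 0) ∧
      (∑ a, ∑ e, (if Real.exp (-R) * Q e < P (a, e) then P (a, e) else 0)) -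
          Real.exp (-R) *
            ∑ a : A, ∑ e, (if Real.exp (-R) * Q e < P (a, e) then Q e else 0) ≤
        ∑ a, ∑ e, (if Real.exp (-R) * Q e < P (a, e) then P (a, e) else 0)) := by
  rw [ite_sum_sub_mul_ite_sum_eq_excess, sInf_l1_Hmin_eq_excess hP hQ hQpos R,
    sInf_l1_Hmin_of_le_eq_excess hP hQpos R]
  exact ⟨rfl, rfl, fun c hc => ⟨one_sub_inv_mul_ite_sum_le_excess hc,
    excess_le_ite_sum (exp_pos _).le fun e => (hQpos e).le⟩⟩

end Hayashi
end

section
/- Let P_{A,E} be a normalized joint distribution on 𝒜 × ℰ with P_E(e) > 0 for every e ∈ ℰ, and let R ∈ ℝ. Then (1/2)·e_I(P_{A,E}|R) ≤ e_d(P_{A,E}|R) and e_d(P_{A,E}|R) ≤ e_I(P_{A,E}|R). -/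
/-!
For `t ∈ (0,1)` and any full-support distribution `Q_E`, Hölder's inequality with exponents
`1/(1-t)` and `1/t` gives `H_{1/(1-t)}(A|E|P‖Q_E) ≤ H^↓_{1+t}(A|E|P)`, hence
`H^↑_{1/(1-t)} ≤ H^↓_{1+t}`: every term of `e_d` is bounded by the term of `e_I` with the same
parameter, so `e_d ≤ e_I`. Conversely `H^↓_{1+s} ≤ H^↑_{1+s}` (take `Q_E = P_E`), and the
reparametrization `t = s/(1+s)` maps `[0,1]` into `[0,1/2]` with `t/(1-t) = s` and `s ≤ 2t`, so
each nonnegative term of `e_I` is at most twice a term of `e_d`.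
-/

open Real Finset Filter

attribute [local instance] Classical.propDecidable

namespace Hayashi

variable {A E : Type*} [Fintype A] [Fintype E]

/-- The exponent `e_d(P|R) = max_{t ∈ [0,1/2]} t(H^↑_{1/(1-t)}(A|E|P) - R)`,
where `H^↑_1 := H(A|E|P)`. -/
noncomputable def e_d {A E : Type*} [Fintype A] [Fintype E]
    (P : A × E → ℝ) (R : ℝ) : ℝ :=
  sSup {x | ∃ t ∈ Set.Icc (0 : ℝ) (1 / 2),
    x = t * ((if t = 0 then condEnt P else condRenyiUp P (t / (1 - t))) - R)}

/-- The exponent `e_I(P|R) = max_{s ∈ [0,1]} s(H^↓_{1+s}(A|E|P) - R)`, where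
`H^↓_{1+s}` is relative to the (full-support) marginal `P_E` and `H^↓_1 := H(A|E|P)`. -/
noncomputable def e_I {A E : Type*} [Fintype A] [Fintype E]
    (P : A × E → ℝ) (R : ℝ) : ℝ :=
  sSup {x | ∃ s ∈ Set.Icc (0 : ℝ) 1,
    x = s * ((if s = 0 then condEnt P else condRenyi P (margE P) s) - R)}

noncomputable def renyiSum (P : A × E → ℝ) (Q : E → ℝ) (s : ℝ) : ℝ :=
  ∑ x : A × E, P x ^ (1 + s) * Q x.2 ^ (-s)

lemma condRenyi_eq_renyiSum (P : A × E → ℝ) (Q : E → ℝ) (s : ℝ) :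
    condRenyi P Q s = -1 / s * Real.log (renyiSum P Q s) := by
  rw [condRenyi, renyiSum, Fintype.sum_prod_type]

lemma mul_condRenyi (P : A × E → ℝ) (Q : E → ℝ) {s : ℝ} (hs : s ≠ 0) :
    s * condRenyi P Q s = -Real.log (renyiSum P Q s) := by
  rw [condRenyi_eq_renyiSum]
  field_simp

section IsDist

variable {S : Type*} [Fintype S] {P : S → ℝ}

lemma IsDist.le_one (hP : IsDist P) (x : S) : P x ≤ 1 :=
  hP.2 ▸ Finset.single_le_sum (fun y _ => hP.1 y) (Finset.mem_univ x)

lemma IsDist.exists_pos (hP : IsDist P) : ∃ x, 0 < P x := by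
  by_contra! h
  have : ∑ x, P x = 0 := Finset.sum_eq_zero fun x _ => le_antisymm (h x) (hP.1 x)
  simp [hP.2] at this

end IsDist

lemma IsDist.margE {P : A × E → ℝ} (hP : IsDist P) : IsDist (margE P) := by
  refine ⟨fun e => Finset.sum_nonneg fun a _ => hP.1 (a, e), ?_⟩
  rw [← hP.2, Fintype.sum_prod_type_right]
  rfl

variable {P : A × E → ℝ} {Q : E → ℝ}

lemma renyiSum_pos (hP : IsDist P) (hQ : ∀ e, 0 < Q e) (s : ℝ) : 0 < renyiSum P Q s := by
  obtain ⟨x, hx⟩ := hP.exists_pos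
  exact Finset.sum_pos'
    (fun y _ => mul_nonneg (rpow_nonneg (hP.1 y) _) (rpow_nonneg (hQ y.2).le _))
    ⟨x, Finset.mem_univ x, mul_pos (rpow_pos_of_pos hx _) (rpow_pos_of_pos (hQ x.2) _)⟩

lemma rpow_le_renyiSum (hP : ∀ x, 0 ≤ P x) (hQ : ∀ e, 0 < Q e) (hQ1 : ∀ e, Q e ≤ 1)
    {s : ℝ} (hs : 0 ≤ s) (x : A × E) : P x ^ (1 + s) ≤ renyiSum P Q s := by
  have hQs : 1 ≤ Q x.2 ^ (-s) := by
    rw [Real.rpow_neg (hQ x.2).le]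
    exact one_le_inv₀ (rpow_pos_of_pos (hQ x.2) s) |>.2 (Real.rpow_le_one (hQ x.2).le (hQ1 x.2) hs)
  calc P x ^ (1 + s) ≤ P x ^ (1 + s) * Q x.2 ^ (-s) :=
        le_mul_of_one_le_right (rpow_nonneg (hP x) _) hQs
    _ ≤ renyiSum P Q s := Finset.single_le_sum
        (fun y _ => mul_nonneg (rpow_nonneg (hP y) _) (rpow_nonneg (hQ y.2).le _))
        (Finset.mem_univ x)

lemma mul_condRenyi_le (hP : IsDist P) (hQ : ∀ e, 0 < Q e) (hQ1 : ∀ e, Q e ≤ 1)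
    {s : ℝ} (hs : 0 < s) (hs1 : s ≤ 1) {x : A × E} (hx : 0 < P x) :
    s * condRenyi P Q s ≤ -2 * Real.log (P x) := by
  have hlog : Real.log (P x) ≤ 0 := Real.log_nonpos hx.le (hP.le_one x)
  have hsum : (1 + s) * Real.log (P x) ≤ Real.log (renyiSum P Q s) := by
    rw [← Real.log_rpow hx]
    exact Real.log_le_log (rpow_pos_of_pos hx _) (rpow_le_renyiSum hP.1 hQ hQ1 hs.le x)
  rw [mul_condRenyi P Q hs.ne']
  nlinarith

lemma sum_mul_inv_margE_mul (hPE : ∀ e, 0 < margE P e) (Q : E → ℝ) :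
    ∑ x : A × E, P x * (margE P x.2)⁻¹ * Q x.2 = ∑ e, Q e := by
  rw [Fintype.sum_prod_type_right]
  refine Finset.sum_congr rfl fun e _ => ?_
  simp only [← Finset.sum_mul]
  change margE P e * (margE P e)⁻¹ * Q e = Q e
  rw [mul_inv_cancel₀ (hPE e).ne', one_mul]

/-- Hölder applied to `P^{1+t} P_E^{-t} = (P Q^{-t}) · (P^t P_E^{-t} Q^t)`: the `1/t`-th powers
of the second factor sum to `∑ Q = 1`. -/
lemma renyiSum_margE_le (hP : ∀ x, 0 ≤ P x) (hPE : ∀ e, 0 < margE P e) (hQ : IsDist Q)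
    (hQpos : ∀ e, 0 < Q e) {t : ℝ} (ht0 : 0 < t) (ht1 : t < 1) :
    renyiSum P (margE P) t ≤ renyiSum P Q (t / (1 - t)) ^ (1 - t) := by
  have h1t : 0 < 1 - t := by linarith
  set f : A × E → ℝ := fun x => P x * Q x.2 ^ (-t)
  set g : A × E → ℝ := fun x => P x ^ t * margE P x.2 ^ (-t) * Q x.2 ^ t
  have hfg : ∀ x, f x * g x = P x ^ (1 + t) * margE P x.2 ^ (-t) := fun x => by
    have hQQ : Q x.2 ^ (-t) * Q x.2 ^ t = 1 := by
      rw [← Real.rpow_add (hQpos x.2)]; simp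
    calc f x * g x
        = (P x ^ (1 : ℝ) * P x ^ t) * margE P x.2 ^ (-t) * (Q x.2 ^ (-t) * Q x.2 ^ t) := by
          simp only [f, g, Real.rpow_one]; ring
      _ = _ := by rw [hQQ, ← Real.rpow_add' (hP x) (by linarith), mul_one]
  have hf : ∀ x, f x ^ (1 / (1 - t)) = P x ^ (1 + t / (1 - t)) * Q x.2 ^ (-(t / (1 - t))) :=
      fun x => by
    rw [Real.mul_rpow (hP x) (rpow_nonneg (hQpos x.2).le _), ← Real.rpow_mul (hQpos x.2).le]
    congr 2 <;> field_simp; ring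
  have hg : ∀ x, g x ^ (1 / t) = P x * (margE P x.2)⁻¹ * Q x.2 := fun x => by
    have hp := hP x
    have hm := (hPE x.2).le
    have hq := (hQpos x.2).le
    simp only [g]
    rw [Real.mul_rpow (by positivity) (by positivity), Real.mul_rpow (by positivity) (by positivity),
      ← Real.rpow_mul (hP x), ← Real.rpow_mul hm, ← Real.rpow_mul hq, mul_one_div_cancel ht0.ne',
      show -t * (1 / t) = -1 by field_simp, Real.rpow_neg_one, Real.rpow_one, Real.rpow_one]
  have holder := Real.inner_le_Lp_mul_Lq_of_nonneg Finset.univ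
    (Real.holderConjugate_one_div h1t ht0 (by ring)) (f := f) (g := g)
    (fun x _ => mul_nonneg (hP x) (rpow_nonneg (hQpos x.2).le _))
    (fun x _ => by have := (hPE x.2).le; have := (hQpos x.2).le; have := hP x; positivity)
  simp only [hfg, hf, hg, sum_mul_inv_margE_mul hPE, hQ.2, Real.one_rpow, mul_one,
    one_div_one_div] at holder
  exact holder

lemma condRenyi_le_condRenyi_margE (hP : IsDist P) (hPE : ∀ e, 0 < margE P e) (hQ : IsDist Q)
    (hQpos : ∀ e, 0 < Q e) {t : ℝ} (ht0 : 0 < t) (ht1 : t < 1) :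
    condRenyi P Q (t / (1 - t)) ≤ condRenyi P (margE P) t := by
  have h1t : 0 < 1 - t := by linarith
  have hT := renyiSum_pos hP hQpos (t / (1 - t))
  have hlog : Real.log (renyiSum P (margE P) t) ≤
      (1 - t) * Real.log (renyiSum P Q (t / (1 - t))) := by
    rw [← Real.log_rpow hT]
    exact Real.log_le_log (renyiSum_pos hP hPE t) (renyiSum_margE_le hP.1 hPE hQ hQpos ht0 ht1)
  rw [condRenyi_eq_renyiSum, condRenyi_eq_renyiSum,
    show -1 / (t / (1 - t)) = -1 / t * (1 - t) by field_simp, mul_assoc]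
  exact mul_le_mul_of_nonpos_left hlog (div_nonpos_of_nonpos_of_nonneg (by norm_num) ht0.le)

lemma condRenyiUp_le_condRenyi_margE (hP : IsDist P) (hPE : ∀ e, 0 < margE P e)
    {t : ℝ} (ht0 : 0 < t) (ht1 : t < 1) :
    condRenyiUp P (t / (1 - t)) ≤ condRenyi P (margE P) t :=
  csSup_le ⟨_, margE P, hP.margE, hPE, rfl⟩ fun _ ⟨_, hQ, hQpos, hx⟩ =>
    hx ▸ condRenyi_le_condRenyi_margE hP hPE hQ hQpos ht0 ht1

lemma condRenyi_margE_le_condRenyiUp (hP : IsDist P) (hPE : ∀ e, 0 < margE P e)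
    {s : ℝ} (hs : 0 < s) : condRenyi P (margE P) s ≤ condRenyiUp P s := by
  have h1s : 0 < 1 + s := by linarith
  have ht1 : s / (1 + s) < 1 := (div_lt_one h1s).2 (by linarith)
  have hst : s / (1 + s) / (1 - s / (1 + s)) = s := by field_simp; ring
  refine le_csSup ⟨condRenyi P (margE P) (s / (1 + s)), ?_⟩ ⟨margE P, hP.margE, hPE, rfl⟩
  rintro _ ⟨Q, hQ, hQpos, rfl⟩
  simpa only [hst] using condRenyi_le_condRenyi_margE hP hPE hQ hQpos (by positivity) ht1

variable (P) (R : ℝ)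

noncomputable def edTerm (t : ℝ) : ℝ :=
  t * ((if t = 0 then condEnt P else condRenyiUp P (t / (1 - t))) - R)

noncomputable def eITerm (s : ℝ) : ℝ :=
  s * ((if s = 0 then condEnt P else condRenyi P (margE P) s) - R)

lemma e_d_eq_sSup_image : e_d P R = sSup (edTerm P R '' Set.Icc 0 (1 / 2)) := by
  simp only [e_d, edTerm, Set.image, eq_comm]

lemma e_I_eq_sSup_image : e_I P R = sSup (eITerm P R '' Set.Icc 0 1) := by
  simp only [e_I, eITerm, Set.image, eq_comm]

@[simp] lemma edTerm_zero : edTerm P R 0 = 0 := zero_mul _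

@[simp] lemma eITerm_zero : eITerm P R 0 = 0 := zero_mul _

variable {P R}

lemma edTerm_le_eITerm (hP : IsDist P) (hPE : ∀ e, 0 < margE P e) {t : ℝ}
    (ht : t ∈ Set.Icc (0 : ℝ) (1 / 2)) : edTerm P R t ≤ eITerm P R t := by
  rcases ht.1.eq_or_lt with rfl | ht0
  · simp
  have hUp := condRenyiUp_le_condRenyi_margE hP hPE ht0 (by linarith [ht.2])
  simp only [edTerm, eITerm, if_neg ht0.ne']
  gcongr

lemma div_one_add_mem_Icc {s : ℝ} (hs : s ∈ Set.Icc (0 : ℝ) 1) :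
    s / (1 + s) ∈ Set.Icc (0 : ℝ) (1 / 2) := by
  have h1s : 0 < 1 + s := by linarith [hs.1]
  refine ⟨div_nonneg hs.1 h1s.le, ?_⟩
  rw [div_le_iff₀ h1s]
  linarith [hs.2]

lemma eITerm_le_two_mul_edTerm (hP : IsDist P) (hPE : ∀ e, 0 < margE P e) {s : ℝ}
    (hs : s ∈ Set.Icc (0 : ℝ) 1) (hnonneg : 0 ≤ eITerm P R s) :
    eITerm P R s ≤ 2 * edTerm P R (s / (1 + s)) := by
  rcases hs.1.eq_or_lt with rfl | hs0
  · simp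
  have h1s : 0 < 1 + s := by linarith
  have ht0 : s / (1 + s) ≠ 0 := by positivity
  have hst : s / (1 + s) / (1 - s / (1 + s)) = s := by field_simp; ring
  have hs2t : s ≤ 2 * (s / (1 + s)) := by
    rw [mul_div_assoc', le_div_iff₀ h1s]; nlinarith [hs.2]
  have hR : 0 ≤ condRenyi P (margE P) s - R := by
    simp only [eITerm, if_neg hs0.ne'] at hnonneg
    exact nonneg_of_mul_nonneg_right hnonneg hs0
  have hUp := condRenyi_margE_le_condRenyiUp hP hPE hs0
  simp only [edTerm, eITerm, if_neg hs0.ne', if_neg ht0, hst]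
  calc s * (condRenyi P (margE P) s - R) ≤ 2 * (s / (1 + s)) * (condRenyi P (margE P) s - R) :=
        mul_le_mul_of_nonneg_right hs2t hR
    _ ≤ 2 * (s / (1 + s) * (condRenyiUp P s - R)) := by rw [mul_assoc]; gcongr

lemma bddAbove_eITerm_image (hP : IsDist P) (hPE : ∀ e, 0 < margE P e) :
    BddAbove (eITerm P R '' Set.Icc 0 1) := by
  obtain ⟨x, hx⟩ := hP.exists_pos
  refine ⟨-2 * Real.log (P x) + |R|, ?_⟩
  rintro _ ⟨s, hs, rfl⟩
  have hlog : Real.log (P x) ≤ 0 := Real.log_nonpos hx.le (hP.le_one x)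
  rcases hs.1.eq_or_lt with rfl | hs0
  · simp only [eITerm_zero]; linarith [abs_nonneg R]
  have h := mul_condRenyi_le hP hPE hP.margE.le_one hs0 hs.2 hx
  have hsR : -(s * R) ≤ |R| := by
    nlinarith [neg_abs_le R, le_abs_self R, hs.2]
  simp only [eITerm, if_neg hs0.ne', mul_sub]
  linarith

lemma bddAbove_edTerm_image (hP : IsDist P) (hPE : ∀ e, 0 < margE P e) :
    BddAbove (edTerm P R '' Set.Icc 0 (1 / 2)) := by
  obtain ⟨M, hM⟩ := bddAbove_eITerm_image (R := R) hP hPE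
  refine ⟨M, ?_⟩
  rintro _ ⟨t, ht, rfl⟩
  exact (edTerm_le_eITerm hP hPE ht).trans
    (hM ⟨t, Set.Icc_subset_Icc_right (by norm_num) ht, rfl⟩)

theorem statement15_general {A E : Type*} [Fintype A] [Fintype E]
    (P : A × E → ℝ) (hP : IsDist P) (hPE : ∀ e, 0 < margE P e) (R : ℝ) :
    (1 / 2) * e_I P R ≤ e_d P R ∧ e_d P R ≤ e_I P R := by
  rw [e_I_eq_sSup_image, e_d_eq_sSup_image]
  have hI := bddAbove_eITerm_image (R := R) hP hPE
  have hD := bddAbove_edTerm_image (R := R) hP hPE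
  constructor
  · suffices sSup (eITerm P R '' Set.Icc 0 1) ≤ 2 * sSup (edTerm P R '' Set.Icc 0 (1 / 2)) by
      linarith
    have hD0 : 0 ≤ sSup (edTerm P R '' Set.Icc 0 (1 / 2)) :=
      le_csSup hD ⟨0, by norm_num, edTerm_zero P R⟩
    refine csSup_le ⟨0, 0, by norm_num, eITerm_zero P R⟩ ?_
    rintro _ ⟨s, hs, rfl⟩
    rcases le_total (eITerm P R s) 0 with hneg | hnonneg
    · linarith
    exact (eITerm_le_two_mul_edTerm hP hPE hs hnonneg).trans
      (mul_le_mul_of_nonneg_left (le_csSup hD ⟨_, div_one_add_mem_Icc hs, rfl⟩) two_pos.le)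
  · refine csSup_le ⟨0, 0, by norm_num, edTerm_zero P R⟩ ?_
    rintro _ ⟨t, ht, rfl⟩
    exact (edTerm_le_eITerm hP hPE ht).trans
      (le_csSup hI ⟨t, Set.Icc_subset_Icc_right (by norm_num) ht, rfl⟩)

/-- Lemma `L3-29-1` of the paper: `e_I(P|R)/2 ≤ e_d(P|R) ≤ e_I(P|R)`. -/
theorem statement15 {A E : Type*} [Fintype A] [Fintype E] [Nonempty A] [Nonempty E]
    (P : A × E → ℝ) (hP : IsDist P) (hPE : ∀ e, 0 < margE P e) (R : ℝ) :
    (1 / 2) * e_I P R ≤ e_d P R ∧ e_d P R ≤ e_I P R :=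
  statement15_general P hP hPE R

end Hayashi
end
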